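/- ILP0W* does not derive the principle R: there is a finite Veltman model M such that every world of M satisfies all instances of P0 and W*, yet some world of M falsifies an instance of R (namely p▷q → ¬(p▷¬r) ▷ (q ∧ □r)). -/

import Mathlib

/-- Modal formulas of interpretability logic: atoms, ⊥, →, □, ▷. -/
inductive Fm : Type
  | atom : ℕ → Fm
  | bot : Fm
  | imp : Fm → Fm → Fm
  | box : Fm → Fm
  | rhd : Fm → Fm → Fm
deriving DecidableEq

namespace Fm
def neg (A : Fm) : Fm := .imp A .bot
def conj (A B : Fm) : Fm := neg (.imp A (neg B))
def disj (A B : Fm) : Fm := .imp (neg A) B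
def dia (A : Fm) : Fm := neg (.box (neg A))
end Fm

/-- `f` is a boolean propositional evaluation (treats □ and ▷ formulas as atoms). -/
def PropEval (f : Fm → Bool) : Prop :=
  f Fm.bot = false ∧ ∀ A B, f (Fm.imp A B) = (!(f A) || f B)

/-- Propositional tautology. -/
def Taut (A : Fm) : Prop := ∀ f, PropEval f → f A = true

/-- Derivability in the interpretability logic IL extended with extra axioms `X`. -/
inductive Prov (X : Fm → Prop) : Fm → Prop
  | taut {A} : Taut A → Prov X A
  | extra {A} : X A → Prov X A
  | l1 (A B) : Prov X (.imp (.box (.imp A B)) (.imp (.box A) (.box B)))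
  | l2 (A) : Prov X (.imp (.box A) (.box (.box A)))
  | l3 (A) : Prov X (.imp (.box (.imp (.box A) A)) (.box A))
  | j1 (A B) : Prov X (.imp (.box (.imp A B)) (.rhd A B))
  | j2 (A B C) : Prov X (.imp (Fm.conj (.rhd A B) (.rhd B C)) (.rhd A C))
  | j3 (A B C) : Prov X (.imp (Fm.conj (.rhd A C) (.rhd B C)) (.rhd (Fm.disj A B) C))
  | j4 (A B) : Prov X (.imp (.rhd A B) (.imp (Fm.dia A) (Fm.dia B)))
  | j5 (A) : Prov X (.rhd (Fm.dia A) A)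
  | mp {A B} : Prov X (.imp A B) → Prov X A → Prov X B
  | nec {A} : Prov X A → Prov X (.box A)

/-- Derivability in plain IL. -/
def ILProv : Fm → Prop := Prov (fun _ => False)

/-- A Veltman frame (IL-frame). -/
structure VFrame where
  W : Type
  ne : Nonempty W
  R : W → W → Prop
  /-- `S x y z` means `y S_x z`. -/
  S : W → W → W → Prop
  R_trans : ∀ {x y z}, R x y → R y z → R x z
  R_cwf : WellFounded (fun x y => R y x)
  S_R : ∀ {x y z}, S x y z → R x y ∧ R x z
  S_refl : ∀ {x y}, R x y → S x y y
  R_S : ∀ {x y z}, R x y → R y z → S x y z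
  S_trans : ∀ {x u v w}, S x u v → S x v w → S x u w

structure VModel extends VFrame where
  val : W → ℕ → Prop

/-- Satisfaction on Veltman models. -/
def VSat (M : VModel) : M.W → Fm → Prop
  | w, .atom n => M.val w n
  | _, .bot => False
  | w, .imp A B => VSat M w A → VSat M w B
  | w, .box A => ∀ v, M.R w v → VSat M v A
  | w, .rhd A B => ∀ u, M.R w u → VSat M u A → ∃ v, M.S w u v ∧ VSat M v B

/-- Validity on a Veltman frame. -/
def VFrame.Valid (F : VFrame) (A : Fm) : Prop :=
  ∀ val : F.W → ℕ → Prop, ∀ w : F.W, VSat { toVFrame := F, val := val } w A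

/-- A generalized Veltman frame (ILset-frame). -/
structure GFrame where
  W : Type
  ne : Nonempty W
  R : W → W → Prop
  /-- `S w x Y` means `x S_w Y`. -/
  S : W → W → Set W → Prop
  R_trans : ∀ {x y z}, R x y → R y z → R x z
  R_cwf : WellFounded (fun x y => R y x)
  S_ne : ∀ {w x Y}, S w x Y → Y.Nonempty
  S_R : ∀ {w x Y}, S w x Y → R w x ∧ ∀ y ∈ Y, R w y
  S_refl : ∀ {w x}, R w x → S w x {x}
  S_qtrans : ∀ {w x Y}, S w x Y → ∀ y ∈ Y, ∀ Z, y ∉ Z → S w y Z → S w x Z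
  R_S : ∀ {w x y}, R w x → R x y → S w x {y}

structure GModel extends GFrame where
  val : W → ℕ → Prop

/-- Satisfaction on generalized Veltman models. -/
def GSat (M : GModel) : M.W → Fm → Prop
  | w, .atom n => M.val w n
  | _, .bot => False
  | w, .imp A B => GSat M w A → GSat M w B
  | w, .box A => ∀ v, M.R w v → GSat M v A
  | w, .rhd A B => ∀ x, M.R w x → GSat M x A →
      ∃ Y, M.S w x Y ∧ ∀ y ∈ Y, GSat M y B

/-- Validity on a generalized Veltman frame. -/
def GFrame.Valid (F : GFrame) (A : Fm) : Prop :=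
  ∀ val : F.W → ℕ → Prop, ∀ w : F.W, GSat { toGFrame := F, val := val } w A

/-- Instances of the principle M0. -/
def m0fm (A B C : Fm) : Fm :=
  .imp (.rhd A B) (.rhd (Fm.conj (Fm.dia A) (.box C)) (Fm.conj B (.box C)))

/-- Instances of the principle P0. -/
def p0fm (A B : Fm) : Fm := .imp (.rhd A (Fm.dia B)) (.box (.rhd A B))

/-- Instances of the principle R. -/
def rfm (A B C : Fm) : Fm :=
  .imp (.rhd A B) (.rhd (Fm.neg (.rhd A (Fm.neg C))) (Fm.conj B (.box C)))

/-- Instances of the principle W. -/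
def wfm (A B : Fm) : Fm :=
  .imp (.rhd A B) (.rhd A (Fm.conj B (.box (Fm.neg A))))

/-- Instances of the principle W*. -/
def wstarfm (A B C : Fm) : Fm :=
  .imp (.rhd A B)
    (.rhd (Fm.conj B (.box C)) (Fm.conj (Fm.conj B (.box C)) (.box (Fm.neg A))))

/-- Instances of the principle R*. -/
def rstarfm (A B C : Fm) : Fm :=
  .imp (.rhd A B)
    (.rhd (Fm.neg (.rhd A (Fm.neg C))) (Fm.conj (Fm.conj B (.box C)) (.box (Fm.neg A))))

/-- The frame condition for M0 on generalized Veltman frames. -/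
def GFrame.M0Cond (F : GFrame) : Prop :=
  ∀ w x y Y, F.R w x → F.R x y → F.S w y Y →
    ∃ Y', Y' ⊆ Y ∧ F.S w x Y' ∧ ∀ y' ∈ Y', ∀ z, F.R y' z → F.R x z

/-- The frame condition for P0 on generalized Veltman frames. -/
def GFrame.P0Cond (F : GFrame) : Prop :=
  ∀ w x y Y Z, F.R w x → F.R x y → F.S w y Y →
    (∀ y' ∈ Y, ∃ z ∈ Z, F.R y' z) → ∃ Z', Z' ⊆ Z ∧ F.S x y Z'

/-- `Γ` is a choice set for `(w,x)`. -/
def GFrame.ChoiceSet (F : GFrame) (w x : F.W) (Γ : Set F.W) : Prop :=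
  ∀ X, F.S w x X → (X ∩ Γ).Nonempty

/-- The frame condition for R on generalized Veltman frames. -/
def GFrame.RCond (F : GFrame) : Prop :=
  ∀ w x y Y, F.R w x → F.R x y → F.S w y Y →
    ∀ Γ, F.ChoiceSet x y Γ →
      ∃ Y', Y' ⊆ Y ∧ F.S w x Y' ∧ ∀ y' ∈ Y', ∀ z, F.R y' z → z ∈ Γ

/-- The axiom set consisting of all instances of P0 and W*. -/
def P0WstarAx : Fm → Prop := fun F => (∃ A B, F = p0fm A B) ∨ (∃ A B C, F = wstarfm A B C)


/-! ### Auxiliary development -/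

/-- Conjunction unfolding for `VSat`. -/
theorem satConj {M : VModel} {w : M.W} {A B : Fm} :
    VSat M w (Fm.conj A B) ↔ VSat M w A ∧ VSat M w B := by
  unfold Fm.conj Fm.neg
  constructor
  · intro h
    by_cases h1 : VSat M w A
    · by_cases h2 : VSat M w B
      · exact ⟨h1, h2⟩
      · exact (h (fun _ hb => h2 hb)).elim
    · exact (h (fun ha _ => h1 ha)).elim
  · rintro ⟨h1, h2⟩ h
    exact h h1 h2

/-- Diamond unfolding for `VSat`. -/
theorem satDia {M : VModel} {w : M.W} {A : Fm} :
    VSat M w (Fm.dia A) ↔ ∃ v, M.R w v ∧ VSat M v A := by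
  unfold Fm.dia Fm.neg
  constructor
  · intro h
    by_contra hc
    push_neg at hc
    exact h (fun v hv ha => hc v hv ha)
  · rintro ⟨v, hv, ha⟩ h
    exact h v hv ha

/-- Soundness of `Prov X` on a Veltman model all of whose worlds satisfy `X`. -/
theorem soundness {X : Fm → Prop} (M : VModel) (hX : ∀ A, X A → ∀ w, VSat M w A) :
    ∀ {A : Fm}, Prov X A → ∀ w, VSat M w A := by
  intro A h
  classical
  induction h with
  | @taut A ht =>
    intro w
    have himp : ∀ A B : Fm, decide (VSat M w (Fm.imp A B)) =
        (!(decide (VSat M w A)) || decide (VSat M w B)) := by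
      intro A B
      show decide (VSat M w (Fm.imp A B)) = (!(decide (VSat M w A)) || decide (VSat M w B))
      by_cases h1 : VSat M w A <;> by_cases h2 : VSat M w B
      · rw [decide_eq_true h1, decide_eq_true h2,
          decide_eq_true (show VSat M w (Fm.imp A B) from fun _ => h2)]
        rfl
      · rw [decide_eq_true h1, decide_eq_false h2,
          decide_eq_false (show ¬ VSat M w (Fm.imp A B) from fun hi => h2 (hi h1))]
        rfl
      · rw [decide_eq_false h1, decide_eq_true h2,
          decide_eq_true (show VSat M w (Fm.imp A B) from fun _ => h2)]
        rfl
      · rw [decide_eq_false h1, decide_eq_false h2,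
          decide_eq_true (show VSat M w (Fm.imp A B) from fun ha => (h1 ha).elim)]
        rfl
    have hPE : PropEval (fun B => decide (VSat M w B)) :=
      ⟨decide_eq_false (fun hf => hf), himp⟩
    exact of_decide_eq_true (ht _ hPE)
  | extra hx => exact hX _ hx
  | l1 A B => exact fun w h1 h2 v hv => h1 v hv (h2 v hv)
  | l2 A => exact fun w h v hv u hu => h u (M.R_trans hv hu)
  | l3 A =>
    intro w h
    exact fun v hv => M.R_cwf.induction (C := fun v => M.R w v → VSat M v A)
      v (fun x IH hwx => h x hwx (fun y hxy => IH y hxy (M.R_trans hwx hxy))) hv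
  | j1 A B => exact fun w h u hu hA => ⟨u, M.S_refl hu, h u hu hA⟩
  | j2 A B C =>
    intro w h u hu hA
    obtain ⟨h1, h2⟩ := satConj.mp h
    obtain ⟨v, hs, hB⟩ := h1 u hu hA
    obtain ⟨v', hs', hC⟩ := h2 v (M.S_R hs).2 hB
    exact ⟨v', M.S_trans hs hs', hC⟩
  | j3 A B C =>
    intro w h u hu hd
    obtain ⟨h1, h2⟩ := satConj.mp h
    by_cases hA : VSat M u A
    · exact h1 u hu hA
    · exact h2 u hu (hd (fun ha => (hA ha).elim))
  | j4 A B =>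
    intro w h hdA
    obtain ⟨u, hu, hA⟩ := satDia.mp hdA
    obtain ⟨v, hs, hB⟩ := h u hu hA
    exact satDia.mpr ⟨v, (M.S_R hs).2, hB⟩
  | j5 A =>
    intro w u hu hdA
    obtain ⟨x, hx, hA⟩ := satDia.mp hdA
    exact ⟨x, M.R_S hu hx, hA⟩
  | mp h1 h2 ih1 ih2 => exact fun w => ih1 w (ih2 w)
  | nec h ih => exact fun w v hv => ih v

/-- The seven worlds of the countermodel. -/
inductive K : Type
  | a | b | c | d | e | f | g
deriving DecidableEq

instance : Fintype K :=
  ⟨⟨↑[K.a, K.b, K.c, K.d, K.e, K.f, K.g], by decide⟩, fun x => by cases x <;> decide⟩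

/-- Accessibility. -/
def Rb : K → K → Bool
  | .a, .b => true | .a, .c => true | .a, .d => true | .a, .e => true
  | .a, .f => true | .a, .g => true
  | .b, .c => true | .b, .e => true
  | .d, .e => true
  | _, _ => false

/-- The S relations. -/
def Sb : K → K → K → Bool
  | .a, .b, .b => true | .a, .c, .c => true | .a, .d, .d => true
  | .a, .e, .e => true | .a, .f, .f => true | .a, .g, .g => true
  | .a, .b, .c => true | .a, .b, .d => true | .a, .b, .e => true
  | .a, .c, .d => true | .a, .c, .e => true | .a, .d, .e => true
  | .a, .f, .g => true
  | .b, .c, .c => true | .b, .e, .e => true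
  | .d, .e, .e => true
  | _, _, _ => false

/-- Rank, witnessing converse well-foundedness. -/
def rk : K → ℕ
  | .a => 2 | .b => 1 | .d => 1 | _ => 0

/-- Valuation: p = {c,f}, q = {d,g}, r = {c,f}. -/
def vl : K → ℕ → Prop := fun w n =>
  match w with
  | .c => n = 0 ∨ n = 2
  | .f => n = 0 ∨ n = 2
  | .d => n = 1
  | .g => n = 1
  | _ => False

theorem kRtrans : ∀ x y z : K, Rb x y = true → Rb y z = true → Rb x z = true := by decide
theorem kSR : ∀ x y z : K, Sb x y z = true → Rb x y = true ∧ Rb x z = true := by decide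
theorem kSrefl : ∀ x y : K, Rb x y = true → Sb x y y = true := by decide
theorem kRS : ∀ x y z : K, Rb x y = true → Rb y z = true → Sb x y z = true := by decide
theorem kStrans : ∀ x u v w : K, Sb x u v = true → Sb x v w = true → Sb x u w = true := by decide
theorem kdec : ∀ x y : K, Rb y x = true → rk x < rk y := by decide

/-- The countermodel. -/
def Mdl : VModel where
  W := K
  ne := ⟨.a⟩
  R x y := Rb x y = true
  S x y z := Sb x y z = true
  R_trans := fun {x y z} h1 h2 => kRtrans x y z h1 h2
  R_cwf := Subrelation.wf (r := InvImage (· < ·) rk)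
    (fun {x y} h => kdec x y h) (InvImage.wf rk Nat.lt_wfRel.wf)
  S_R := fun {x y z} h => kSR x y z h
  S_refl := fun {x y} h => kSrefl x y h
  R_S := fun {x y z} h1 h2 => kRS x y z h1 h2
  S_trans := fun {x u v w} h1 h2 => kStrans x u v w h1 h2
  val := vl

theorem noRc : ∀ v : K, Rb K.c v = true → False := by decide
theorem noRe : ∀ v : K, Rb K.e v = true → False := by decide
theorem noRf : ∀ v : K, Rb K.f v = true → False := by decide
theorem noRg : ∀ v : K, Rb K.g v = true → False := by decide
theorem Saez : ∀ z : K, Sb K.a K.e z = true → z = K.e := by decide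
theorem Safz : ∀ z : K, Sb K.a K.f z = true → z = K.f ∨ z = K.g := by decide
theorem Sacz : ∀ z : K, Sb K.a K.c z = true → z = K.c ∨ z = K.d ∨ z = K.e := by decide
theorem Sbcz : ∀ z : K, Sb K.b K.c z = true → z = K.c := by decide

/-- `c` and `f` are twins: they satisfy the same formulas. -/
theorem twin : ∀ A : Fm, VSat Mdl K.c A ↔ VSat Mdl K.f A := by
  intro A
  induction A with
  | atom n => exact Iff.rfl
  | bot => exact Iff.rfl
  | imp A B ihA ihB => exact imp_congr ihA ihB
  | box A ih =>
    constructor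
    · exact fun _ v hv => (noRf v hv).elim
    · exact fun _ v hv => (noRc v hv).elim
  | rhd A B ihA ihB =>
    constructor
    · exact fun _ v hv => (noRf v hv).elim
    · exact fun _ v hv => (noRc v hv).elim

set_option maxHeartbeats 1000000 in
/-- Every world of the countermodel satisfies every instance of P0. -/
theorem p0all : ∀ w : K, ∀ A B : Fm, VSat Mdl w (p0fm A B) := by
  intro w A B h v hv u hu hA
  exfalso
  cases w <;> cases v <;> cases u <;> first
    | exact Bool.noConfusion hv
    | exact Bool.noConfusion hu
    | skip
  -- remaining goals: (a,b,c), (a,b,e), (a,d,e)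
  · -- w = a, v = b, u = c
    have hfA := (twin A).mp hA
    obtain ⟨z, hz, hdz⟩ := h K.f rfl hfA
    obtain ⟨x, hx, -⟩ := satDia.mp hdz
    rcases Safz z hz with h' | h'
    · subst h'; exact noRf x hx
    · subst h'; exact noRg x hx
  · -- w = a, v = b, u = e
    obtain ⟨z, hz, hdz⟩ := h K.e rfl hA
    have h' := Saez z hz
    subst h'
    obtain ⟨x, hx, -⟩ := satDia.mp hdz
    exact noRe x hx
  · -- w = a, v = d, u = e
    obtain ⟨z, hz, hdz⟩ := h K.e rfl hA
    have h' := Saez z hz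
    subst h'
    obtain ⟨x, hx, -⟩ := satDia.mp hdz
    exact noRe x hx

set_option maxHeartbeats 1000000 in
/-- Every world of the countermodel satisfies every instance of W*. -/
theorem wstarall : ∀ w : K, ∀ A B C : Fm, VSat Mdl w (wstarfm A B C) := by
  intro w A B C h u hu hBC
  cases w <;> cases u <;> first
    | exact Bool.noConfusion hu
    | skip
  -- remaining goals: (a,b), (a,c), (a,d), (a,e), (a,f), (a,g), (b,c), (b,e), (d,e)
  · -- w = a, u = b
    by_cases heA : VSat Mdl K.e A
    · obtain ⟨z, hz, hzB⟩ := h K.e rfl heA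
      have h' := Saez z hz
      subst h'
      exact ⟨K.e, rfl, satConj.mpr ⟨satConj.mpr ⟨hzB, fun x hx => (noRe x hx).elim⟩,
        fun x hx => (noRe x hx).elim⟩⟩
    · by_cases hcA : VSat Mdl K.c A
      · obtain ⟨z, hz, hzB⟩ := h K.c rfl hcA
        rcases Sacz z hz with h' | h' | h'
        · subst h'
          exact ⟨K.c, rfl, satConj.mpr ⟨satConj.mpr ⟨hzB, fun x hx => (noRc x hx).elim⟩,
            fun x hx => (noRc x hx).elim⟩⟩
        · subst h'
          refine ⟨K.d, rfl, satConj.mpr ⟨satConj.mpr ⟨hzB, ?_⟩, ?_⟩⟩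
          · intro x hx
            cases x <;> first
              | exact Bool.noConfusion hx
              | exact (satConj.mp hBC).2 K.e rfl
          · intro x hx
            cases x <;> first
              | exact Bool.noConfusion hx
              | exact fun hA => heA hA
        · subst h'
          exact ⟨K.e, rfl, satConj.mpr ⟨satConj.mpr ⟨hzB, fun x hx => (noRe x hx).elim⟩,
            fun x hx => (noRe x hx).elim⟩⟩
      · refine ⟨K.b, rfl, satConj.mpr ⟨hBC, ?_⟩⟩
        intro x hx
        cases x <;> first
          | exact Bool.noConfusion hx
          | exact fun hA => hcA hA
          | exact fun hA => heA hA
  · -- w = a, u = c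
    exact ⟨_, kSrefl _ _ hu, satConj.mpr ⟨hBC, fun x hx => (noRc x hx).elim⟩⟩
  · -- w = a, u = d
    by_cases heA : VSat Mdl K.e A
    · obtain ⟨z, hz, hzB⟩ := h K.e rfl heA
      have h' := Saez z hz
      subst h'
      exact ⟨K.e, rfl, satConj.mpr ⟨satConj.mpr ⟨hzB, fun x hx => (noRe x hx).elim⟩,
        fun x hx => (noRe x hx).elim⟩⟩
    · refine ⟨K.d, rfl, satConj.mpr ⟨hBC, ?_⟩⟩
      intro x hx
      cases x <;> first
        | exact Bool.noConfusion hx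
        | exact fun hA => heA hA
  · -- w = a, u = e
    exact ⟨_, kSrefl _ _ hu, satConj.mpr ⟨hBC, fun x hx => (noRe x hx).elim⟩⟩
  · -- w = a, u = f
    exact ⟨_, kSrefl _ _ hu, satConj.mpr ⟨hBC, fun x hx => (noRf x hx).elim⟩⟩
  · -- w = a, u = g
    exact ⟨_, kSrefl _ _ hu, satConj.mpr ⟨hBC, fun x hx => (noRg x hx).elim⟩⟩
  · -- w = b, u = c
    exact ⟨_, kSrefl _ _ hu, satConj.mpr ⟨hBC, fun x hx => (noRc x hx).elim⟩⟩
  · -- w = b, u = e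
    exact ⟨_, kSrefl _ _ hu, satConj.mpr ⟨hBC, fun x hx => (noRe x hx).elim⟩⟩
  · -- w = d, u = e
    exact ⟨_, kSrefl _ _ hu, satConj.mpr ⟨hBC, fun x hx => (noRe x hx).elim⟩⟩

/-- The instance of R with p, q, r fails at the root `a`. -/
theorem failR : ¬ VSat Mdl K.a (rfm (.atom 0) (.atom 1) (.atom 2)) := by
  intro h
  have hpq : VSat Mdl K.a (Fm.rhd (.atom 0) (.atom 1)) := by
    intro u hu hp
    cases u
    case a => exact Bool.noConfusion hu
    case b => exact hp.elim
    case c => exact ⟨K.d, rfl, rfl⟩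
    case d => exact absurd (show (0 : ℕ) = 1 from hp) (by decide)
    case e => exact hp.elim
    case f => exact ⟨K.g, rfl, rfl⟩
    case g => exact absurd (show (0 : ℕ) = 1 from hp) (by decide)
  have hnb : VSat Mdl K.b (Fm.neg (Fm.rhd (.atom 0) (Fm.neg (.atom 2)))) := by
    intro hb
    obtain ⟨z, hz, hzr⟩ := hb K.c rfl (Or.inl rfl)
    have h' := Sbcz z hz
    subst h'
    exact hzr (Or.inr rfl)
  obtain ⟨v, hv, hqr⟩ := h hpq K.b rfl hnb
  obtain ⟨hq, hbr⟩ := satConj.mp hqr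
  cases v
  case a => exact Bool.noConfusion hv
  case b => exact hq
  case c => exact absurd (show (1 : ℕ) = 0 ∨ (1 : ℕ) = 2 from hq) (by decide)
  case d => exact hbr K.e rfl
  case e => exact hq
  case f => exact Bool.noConfusion hv
  case g => exact Bool.noConfusion hv

/-- ILP0W* does not derive R; witnessed by a finite Veltman model
all whose worlds satisfy P0 and W*, while some world falsifies
p▷q → ¬(p▷¬r) ▷ (q ∧ □r). -/
theorem ilp0wstar_not_derives_r :
    (¬ Prov P0WstarAx (rfm (.atom 0) (.atom 1) (.atom 2))) ∧
    ∃ M : VModel, Finite M.W ∧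
      (∀ w : M.W, ∀ A B, VSat M w (p0fm A B)) ∧
      (∀ w : M.W, ∀ A B C, VSat M w (wstarfm A B C)) ∧
      ∃ w : M.W, ¬ VSat M w (rfm (.atom 0) (.atom 1) (.atom 2)) := by
  constructor
  · intro hprov
    have hax : ∀ A, P0WstarAx A → ∀ w, VSat Mdl w A := by
      rintro A (⟨B, C, rfl⟩ | ⟨B, C, D, rfl⟩) w
      · exact p0all w B C
      · exact wstarall w B C D
    exact failR (soundness Mdl hax hprov K.a)
  · exact ⟨Mdl, inferInstanceAs (Finite K), p0all, wstarall, ⟨K.a, failR⟩⟩
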